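/- arXiv:1207.3736 — 6 statements merged into one kernel-verified Lean document; each statement's English description precedes it below -/
import Mathlib

section
/- Let L ∈ ℝ^{n×n} be a symmetric matrix with zero row sums. Then L is positive semi-definite and has rank n−1 if and only if [L]_{S,S} > 0 for every nonempty proper subset S ⊊ {1,…,n}. -/
open Finset
open Matrix

lemma quad_ext {n : Type*} [Fintype n] (M : Matrix n n ℝ) (p : n → Prop) [DecidablePred p]
    [instS : Fintype {a // p a}] (x : {a // p a} → ℝ) :
    (fun i => if h : p i then x ⟨i, h⟩ else 0) ⬝ᵥ M *ᵥ (fun i => if h : p i then x ⟨i, h⟩ else 0)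
      = x ⬝ᵥ (M.submatrix (Subtype.val : {a // p a} → n) Subtype.val) *ᵥ x := by
  classical
  obtain rfl : Subtype.fintype p = instS := Subsingleton.elim _ _
  set x' : n → ℝ := fun i => if h : p i then x ⟨i, h⟩ else 0 with hx'
  have key : ∀ g : n → ℝ, ∑ i, x' i * g i = ∑ i : {a // p a}, x i * g i := by
    intro g
    rw [← Fintype.sum_subtype_add_sum_subtype p (fun i => x' i * g i)]
    have h1 : ∑ i : {a // ¬ p a}, x' i.1 * g i.1 = 0 := by
      apply Finset.sum_eq_zero; rintro ⟨i, hi⟩ _; simp [hx', hi]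
    rw [h1, add_zero]
    apply Finset.sum_congr rfl; rintro ⟨i, hi⟩ _; simp [hx', hi]
  show ∑ i, x' i * (M *ᵥ x') i = _
  rw [key]
  show _ = ∑ i : {a // p a}, x i * ((M.submatrix _ _) *ᵥ x) i
  apply Finset.sum_congr rfl
  rintro ⟨i, hi⟩ -
  congr 1
  show ∑ j, M i j * x' j = ∑ j : {a // p a}, M.submatrix Subtype.val Subtype.val ⟨i, hi⟩ j * x j
  calc ∑ j, M i j * x' j = ∑ j, x' j * M i j := by simp [mul_comm]
    _ = ∑ j : {a // p a}, x j * M i j := key _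
    _ = _ := by apply Finset.sum_congr rfl; rintro ⟨j, hj⟩ -; simp [submatrix, mul_comm]

lemma posDef_of_minorsPos : ∀ (m : ℕ) {n : Type} [Fintype n] [DecidableEq n]
    (M : Matrix n n ℝ), Fintype.card n = m → M.IsSymm →
    (∀ (k : ℕ) (f : Fin k → n), Function.Injective f → 0 < (M.submatrix f f).det) →
    M.PosDef := by
  intro m
  induction m with
  | zero =>
    intro n _ _ M hcard hsym _
    have he : IsEmpty n := Fintype.card_eq_zero_iff.mp hcard
    refine PosDef.of_dotProduct_mulVec_pos ?_ (fun x hx => absurd (funext fun i => (he.false i).elim) hx)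
    rw [Matrix.IsHermitian, conjTranspose_eq_transpose_of_trivial]; exact hsym
  | succ m IH =>
    intro n _ _ M hcard hsym hmin
    have hherm : M.IsHermitian := by
      rw [Matrix.IsHermitian, conjTranspose_eq_transpose_of_trivial]; exact hsym
    have hsym' : ∀ i j, M i j = M j i := fun i j => by
      conv_lhs => rw [← hsym]
      rfl
    obtain ⟨i₀⟩ : Nonempty n := Fintype.card_pos_iff.mp (by omega)
    set q : n → Prop := fun x => x ≠ i₀ with hq
    set c : {a // q a} → n := Subtype.val with hc
    have hcinj : Function.Injective c := Subtype.val_injective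
    set A : Matrix {a // q a} {a // q a} ℝ := M.submatrix c c with hA
    have hcard' : Fintype.card {a // q a} = m := by
      have := Fintype.card_subtype_compl (fun x : n => x = i₀)
      simp only [Fintype.card_subtype_eq] at this
      have h2 : Fintype.card {a // q a} = Fintype.card n - 1 := this
      omega
    -- minors of A are minors of M
    have hminA : ∀ (k : ℕ) (f : Fin k → {a // q a}), Function.Injective f →
        0 < (A.submatrix f f).det := by
      intro k f hf
      rw [hA, submatrix_submatrix]
      exact hmin k (c ∘ f) (hcinj.comp hf)
    have hAsymm : A.IsSymm := by
      ext i j; exact hsym' _ _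
    have hApd : A.PosDef := IH A hcard' hAsymm hminA
    have hAdet : 0 < A.det := hApd.det_pos
    have : Invertible A := invertibleOfIsUnitDet A (ne_of_gt hAdet).isUnit
    have hMdet : 0 < M.det := by
      have e : Fin (m + 1) ≃ n := (Fintype.equivFinOfCardEq hcard).symm
      have := hmin (m + 1) e e.injective
      rwa [det_submatrix_equiv_self] at this
    -- Schur complement
    set b : {a // q a} → ℝ := fun j => M j.1 i₀ with hb
    set d : ℝ := M i₀ i₀ with hd
    set s : ℝ := d - b ⬝ᵥ (A⁻¹ *ᵥ b) with hs
    have hT : Unique {x : n // ¬ q x} :=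
      ⟨⟨⟨i₀, not_ne_iff.mpr rfl⟩⟩, fun ⟨x, hx⟩ => Subtype.ext (not_ne_iff.mp hx)⟩
    have hdetMA : M.det = A.det * s := by
      set e : _ ⊕ _ ≃ n := Equiv.sumCompl q with he
      have hsub : M.submatrix e e =
          fromBlocks A (Matrix.of fun j (_ : {x // ¬ q x}) => b j)
            (Matrix.of fun (_ : {x // ¬ q x}) j => b j) (Matrix.of fun _ _ => d) := by
        ext i j
        rcases i with ⟨i, hi⟩ | ⟨i, hi⟩ <;> rcases j with ⟨j, hj⟩ | ⟨j, hj⟩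
        · simp [hA, he]; rfl
        · rw [hq, not_ne_iff] at hj; subst hj
          simp [hb, he]
        · rw [hq, not_ne_iff] at hi; subst hi
          simp [hb, he, hsym' _ _]
        · rw [hq, not_ne_iff] at hi; rw [hq, not_ne_iff] at hj; subst hi; subst hj
          simp [hd, he]
      have h1 : M.det = (M.submatrix e e).det := (det_submatrix_equiv_self e M).symm
      rw [h1, hsub, det_fromBlocks₁₁]
      congr 1
      rw [det_unique]
      have : (⅟A) = A⁻¹ := invOf_eq_nonsing_inv A
      simp only [this, Matrix.sub_apply, of_apply, mul_apply, Matrix.sub_apply]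
      rw [hs]
      congr 1
      simp [dotProduct, mulVec, dotProduct, Finset.mul_sum, mul_apply]
      rw [Finset.sum_comm]
      apply Finset.sum_congr rfl
      intro j _
      rw [Finset.sum_mul]
      apply Finset.sum_congr rfl
      intro k _
      ring
    have hspos : 0 < s := by
      by_contra hle
      push_neg at hle
      nlinarith
    haveI := hT
    have split : ∀ g : n → ℝ, ∑ i, g i = (∑ i : {a // q a}, g i.1) + g i₀ := by
      intro g
      rw [← Fintype.sum_subtype_add_sum_subtype q g]
      congr 1
      rw [Fintype.sum_unique (fun i : {a // ¬ q a} => g i.1)]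
      exact congrArg g (not_ne_iff.mp (default : {x // ¬ q x}).2)
    have hAval : ∀ i j : {a // q a}, A i j = M i.1 j.1 := fun i j => rfl
    have hAinv_symm : A⁻¹ᵀ = A⁻¹ := by
      rw [transpose_nonsing_inv, show Aᵀ = A from hAsymm]
    have hu : A *ᵥ (A⁻¹ *ᵥ b) = b := by
      rw [Matrix.mulVec_mulVec, Matrix.mul_nonsing_inv A (ne_of_gt hAdet).isUnit, Matrix.one_mulVec]
    have hcross : ∀ v : {a // q a} → ℝ, (A⁻¹ *ᵥ b) ⬝ᵥ (A *ᵥ v) = b ⬝ᵥ v := by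
      intro v
      rw [Matrix.dotProduct_mulVec, ← Matrix.mulVec_transpose]
      congr 1
      rw [show Aᵀ = A from hAsymm] at *
      exact hu
    refine PosDef.of_dotProduct_mulVec_pos hherm (fun x hx => ?_)
    rw [star_trivial]
    set c₀ : ℝ := x i₀ with hc₀
    set y : {a // q a} → ℝ := fun j => x j.1 with hy
    have hexp : x ⬝ᵥ M *ᵥ x = y ⬝ᵥ A *ᵥ y + 2 * c₀ * (b ⬝ᵥ y) + c₀ ^ 2 * d := by
      have inner : ∀ i : n, (M *ᵥ x) i = (∑ j : {a // q a}, M i j.1 * x j.1) + M i i₀ * c₀ := by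
        intro i
        exact split (fun j => M i j * x j)
      calc x ⬝ᵥ M *ᵥ x = ∑ i, x i * ((∑ j : {a // q a}, M i j.1 * x j.1) + M i i₀ * c₀) := by
            apply Finset.sum_congr rfl
            intro i _
            rw [inner i]
        _ = (∑ i : {a // q a}, x i.1 * ((∑ j : {a // q a}, M i.1 j.1 * x j.1) + M i.1 i₀ * c₀))
              + x i₀ * ((∑ j : {a // q a}, M i₀ j.1 * x j.1) + M i₀ i₀ * c₀) :=
            split _
        _ = (∑ i : {a // q a}, ((y i * ∑ j : {a // q a}, A i j * y j) + c₀ * (b i * y i)))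
              + (c₀ * (b ⬝ᵥ y) + c₀ ^ 2 * d) := by
            congr 1
            · apply Finset.sum_congr rfl
              intro i _
              simp only [hAval, hy, hb, hc₀]
              ring
            · rw [dotProduct]
              have : ∀ j : {a // q a}, M i₀ j.1 * x j.1 = b j * y j := by
                intro j
                rw [hb, hy, hsym' i₀ j.1]
              rw [Finset.sum_congr rfl (fun j _ => this j)]
              rw [hd, hc₀]
              ring
        _ = y ⬝ᵥ A *ᵥ y + 2 * c₀ * (b ⬝ᵥ y) + c₀ ^ 2 * d := by
            rw [Finset.sum_add_distrib, ← Finset.mul_sum]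
            simp only [dotProduct, mulVec]
            ring
    set w : {a // q a} → ℝ := y + c₀ • (A⁻¹ *ᵥ b) with hw
    have hw2 : w ⬝ᵥ A *ᵥ w
        = y ⬝ᵥ A *ᵥ y + 2 * c₀ * (b ⬝ᵥ y) + c₀ ^ 2 * (b ⬝ᵥ A⁻¹ *ᵥ b) := by
      simp only [hw, Matrix.mulVec_add, Matrix.mulVec_smul, add_dotProduct, dotProduct_add,
        smul_dotProduct, dotProduct_smul, smul_eq_mul]
      rw [hu, hcross y, dotProduct_comm y b, dotProduct_comm (A⁻¹ *ᵥ b) b]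
      ring
    have hkey : x ⬝ᵥ M *ᵥ x = w ⬝ᵥ A *ᵥ w + c₀ ^ 2 * s := by
      rw [hexp, hw2, hs]
      ring
    rw [hkey]
    by_cases hw0 : w = 0
    · have hc0 : c₀ ≠ 0 := by
        intro h0
        apply hx
        funext i
        by_cases hi : q i
        · have : y ⟨i, hi⟩ = 0 := by
            have := congrFun hw0 ⟨i, hi⟩
            simpa [hw, h0] using this
          simpa [hy] using this
        · rw [hq, not_ne_iff] at hi
          subst hi
          exact h0
      rw [hw0]
      simp only [Matrix.mulVec_zero, dotProduct_zero, zero_add]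
      positivity
    · have h1 : 0 < w ⬝ᵥ A *ᵥ w := by
        have := hApd.dotProduct_mulVec_pos hw0
        rwa [star_trivial] at this
      nlinarith [sq_nonneg c₀]


/-- A symmetric zero-row-sum matrix `L ∈ ℝ^{n×n}` is positive
semi-definite of rank `n-1` iff all proper principal minors `[L]_{S,S}` (for nonempty
proper subsets `S ⊊ {1,…,n}`) are positive. -/
theorem zero_row_sum_posSemidef_rank_iff_proper_principal_minors_pos
    (n : ℕ) (L : Matrix (Fin n) (Fin n) ℝ) (hsym : L.IsSymm)
    (hrow : ∀ i, ∑ j, L i j = 0) :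
    (L.PosSemidef ∧ L.rank = n - 1) ↔
      ∀ S : Finset (Fin n), S.Nonempty → S ≠ Finset.univ →
        0 < (L.submatrix (fun i : {x // x ∈ S} => (i : Fin n))
              (fun j : {x // x ∈ S} => (j : Fin n))).det := by
  classical
  have hherm : L.IsHermitian := by
    rw [Matrix.IsHermitian, conjTranspose_eq_transpose_of_trivial]; exact hsym
  have hsym' : ∀ i j, L i j = L j i := fun i j => by
    conv_lhs => rw [← hsym]
    rfl
  have hone : L *ᵥ (fun _ => (1 : ℝ)) = 0 := by
    funext i
    simpa [mulVec, dotProduct] using hrow i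
  have hfinrank_pi : Module.finrank ℝ (Fin n → ℝ) = n := by
    simp [Module.finrank_pi]
  constructor
  · rintro ⟨hpsd, hrank⟩ S hSne hSuniv
    obtain ⟨i₁, hi₁⟩ := hSne
    have hn : 0 < n := i₁.pos
    have hone_ne : (fun _ => (1 : ℝ) : Fin n → ℝ) ≠ 0 := by
      intro h
      have := congrFun h ⟨0, hn⟩
      simpa using this
    have hrank' : Module.finrank ℝ (LinearMap.range L.mulVecLin) = n - 1 := hrank
    have hnul : Module.finrank ℝ (LinearMap.ker L.mulVecLin) = 1 := by
      have h1 := LinearMap.finrank_range_add_finrank_ker L.mulVecLin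
      rw [hfinrank_pi, hrank'] at h1
      omega
    have hmem1 : (fun _ => (1 : ℝ) : Fin n → ℝ) ∈ LinearMap.ker L.mulVecLin := by
      simp [LinearMap.mem_ker, Matrix.mulVecLin_apply, hone]
    have hker_eq : LinearMap.ker L.mulVecLin
        = Submodule.span ℝ {(fun _ => (1 : ℝ) : Fin n → ℝ)} := by
      refine (Submodule.eq_of_le_of_finrank_le ?_ ?_).symm
      · rw [Submodule.span_le, Set.singleton_subset_iff]
        exact hmem1
      · rw [hnul, finrank_span_singleton hone_ne]
    -- positive definiteness of the principal submatrix
    have hpd : (L.submatrix (fun i : {x // x ∈ S} => (i : Fin n))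
        (fun j : {x // x ∈ S} => (j : Fin n))).PosDef := by
      refine PosDef.of_dotProduct_mulVec_pos (hherm.submatrix _) (fun x hx => ?_)
      rw [star_trivial]
      set x' : Fin n → ℝ := fun i => if h : i ∈ S then x ⟨i, h⟩ else 0 with hx'
      have hquad : x' ⬝ᵥ L *ᵥ x'
          = x ⬝ᵥ (L.submatrix (fun i : {x // x ∈ S} => (i : Fin n))
              (fun j : {x // x ∈ S} => (j : Fin n))) *ᵥ x :=
        quad_ext L (fun i => i ∈ S) x
      have hge : 0 ≤ x' ⬝ᵥ L *ᵥ x' := by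
        have := hpsd.dotProduct_mulVec_nonneg x'
        rwa [star_trivial] at this
      rw [← hquad]
      rcases lt_or_eq_of_le hge with h | h
      · exact h
      · exfalso
        have hLx' : L *ᵥ x' = 0 := by
          have := (hpsd.dotProduct_mulVec_zero_iff x').mp
          rw [star_trivial] at this
          exact this h.symm
        have hmem : x' ∈ LinearMap.ker L.mulVecLin := by
          simp [LinearMap.mem_ker, Matrix.mulVecLin_apply, hLx']
        rw [hker_eq, Submodule.mem_span_singleton] at hmem
        obtain ⟨a, ha⟩ := hmem
        obtain ⟨j₀, hj₀⟩ : ∃ j, j ∉ S := by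
          by_contra h'
          push_neg at h'
          exact hSuniv (Finset.eq_univ_iff_forall.mpr h')
        have ha0 : a = 0 := by
          have := congrFun ha j₀
          simpa [hx', hj₀] using this
        apply hx
        funext i
        have := congrFun ha i.1
        simp [ha0, hx', i.2] at this
        exact this.symm
    exact hpd.det_pos
  · intro hmin
    rcases Nat.eq_zero_or_pos n with h0 | hn
    · subst h0
      have he : IsEmpty (Fin 0) := inferInstance
      constructor
      · exact PosSemidef.of_dotProduct_mulVec_nonneg hherm fun x => le_of_eq (by simp [dotProduct])
      · have h1 : L.rank ≤ 0 := by
          simpa using L.rank_le_card_width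
        omega
    · set i₀ : Fin n := ⟨0, hn⟩ with hi₀
      set q : Fin n → Prop := fun x => x ≠ i₀ with hq
      set M : Matrix {a // q a} {a // q a} ℝ :=
        L.submatrix (Subtype.val : {a // q a} → Fin n) Subtype.val with hM
      have hcard' : Fintype.card {a // q a} = n - 1 := by
        have := Fintype.card_subtype_compl (fun x : Fin n => x = i₀)
        simp only [Fintype.card_subtype_eq] at this
        have h2 : Fintype.card {a // q a} = Fintype.card (Fin n) - 1 := this
        simpa using h2
      have hMsymm : M.IsSymm := by
        ext i j
        exact hsym' _ _
      have hMmin : ∀ (k : ℕ) (f : Fin k → {a // q a}), Function.Injective f →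
          0 < (M.submatrix f f).det := by
        intro k f hf
        rcases Nat.eq_zero_or_pos k with hk | hk
        · subst hk
          simp [Matrix.det_isEmpty]
        · set S : Finset (Fin n) := Finset.image (fun i => (f i).1) Finset.univ with hS
          have hSne : S.Nonempty := ⟨(f ⟨0, hk⟩).1, Finset.mem_image.mpr ⟨⟨0, hk⟩, Finset.mem_univ _, rfl⟩⟩
          have hi₀S : i₀ ∉ S := by
            intro hmem
            obtain ⟨i, -, hi⟩ := Finset.mem_image.mp hmem
            exact (f i).2 hi
          have hSuniv : S ≠ Finset.univ := by
            intro h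
            exact hi₀S (h ▸ Finset.mem_univ i₀)
          have hbij : Function.Bijective
              (fun i : Fin k => (⟨(f i).1, Finset.mem_image.mpr ⟨i, Finset.mem_univ _, rfl⟩⟩
                : {x // x ∈ S})) := by
            constructor
            · intro i j hij
              simp only [Subtype.mk.injEq] at hij
              exact hf (Subtype.ext hij)
            · rintro ⟨x, hx⟩
              obtain ⟨i, -, hi⟩ := Finset.mem_image.mp hx
              exact ⟨i, Subtype.ext hi⟩
          set e : Fin k ≃ {x // x ∈ S} := Equiv.ofBijective _ hbij with he
          have hsubeq : M.submatrix f f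
              = (L.submatrix (fun i : {x // x ∈ S} => (i : Fin n))
                  (fun j : {x // x ∈ S} => (j : Fin n))).submatrix e e := by
            ext i j
            rfl
          rw [hsubeq, Matrix.det_submatrix_equiv_self]
          exact hmin S hSne hSuniv
      have hMpd : M.PosDef := posDef_of_minorsPos (n - 1) M hcard' hMsymm hMmin
      -- quadratic form reduction
      have key : ∀ x : Fin n → ℝ,
          x ⬝ᵥ L *ᵥ x = (fun j : {a // q a} => x j.1 - x i₀) ⬝ᵥ
            M *ᵥ (fun j : {a // q a} => x j.1 - x i₀) := by
        intro x
        set y : Fin n → ℝ := fun i => x i - x i₀ with hy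
        have hcol : (fun _ => (1 : ℝ)) ⬝ᵥ (L *ᵥ x) = 0 := by
          simp only [dotProduct, mulVec, one_mul]
          rw [Finset.sum_comm]
          apply Finset.sum_eq_zero
          intro j _
          have hzero : ∑ i, L i j = 0 := by
            rw [Finset.sum_congr rfl (fun i _ => hsym' i j)]
            exact hrow j
          rw [← Finset.sum_mul, hzero, zero_mul]
        have hysub : y = x - x i₀ • (fun _ => (1 : ℝ)) := by
          funext i
          simp [hy, smul_eq_mul]
        have hLy : L *ᵥ y = L *ᵥ x := by
          rw [hysub, Matrix.mulVec_sub, Matrix.mulVec_smul, hone]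
          simp
        have h1 : y ⬝ᵥ L *ᵥ y = x ⬝ᵥ L *ᵥ x := by
          rw [hLy, hysub, sub_dotProduct, smul_dotProduct, hcol]
          simp
        have hyd : y = fun i => if h : q i then (fun j : {a // q a} => y j.1) ⟨i, h⟩ else 0 := by
          funext i
          by_cases h : q i
          · rw [dif_pos h]
          · rw [hq, not_ne_iff] at h
            subst h
            rw [dif_neg (not_ne_iff.mpr rfl : ¬ q i₀)]
            simp [hy]
        calc x ⬝ᵥ L *ᵥ x = y ⬝ᵥ L *ᵥ y := h1.symm
          _ = (fun j : {a // q a} => y j.1) ⬝ᵥ M *ᵥ (fun j : {a // q a} => y j.1) := by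
              conv_lhs => rw [hyd]
              exact quad_ext L q (fun j : {a // q a} => y j.1)
          _ = _ := by
              simp only [hy]
      constructor
      · refine PosSemidef.of_dotProduct_mulVec_nonneg hherm (fun x => ?_)
        rw [star_trivial, key x]
        have := hMpd.posSemidef.dotProduct_mulVec_nonneg (fun j : {a // q a} => x j.1 - x i₀)
        rwa [star_trivial] at this
      · have hone_ne : (fun _ => (1 : ℝ) : Fin n → ℝ) ≠ 0 := by
          intro h
          have := congrFun h ⟨0, hn⟩
          simpa using this
        have hker_le : LinearMap.ker L.mulVecLin
            ≤ Submodule.span ℝ {(fun _ => (1 : ℝ) : Fin n → ℝ)} := by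
          intro v hv
          have hv' : L *ᵥ v = 0 := by
            rwa [LinearMap.mem_ker, Matrix.mulVecLin_apply] at hv
          have h0 : v ⬝ᵥ L *ᵥ v = 0 := by rw [hv']; simp
          rw [key v] at h0
          have hz : (fun j : {a // q a} => v j.1 - v i₀) = 0 := by
            by_contra hz
            have := hMpd.dotProduct_mulVec_pos hz
            rw [star_trivial] at this
            exact absurd h0 (ne_of_gt this)
          rw [Submodule.mem_span_singleton]
          refine ⟨v i₀, funext fun i => ?_⟩
          by_cases h : q i
          · have h2 := congrFun hz ⟨i, h⟩
            simp only [Pi.zero_apply, sub_eq_zero] at h2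
            simp [smul_eq_mul]
            exact h2.symm
          · rw [hq, not_ne_iff] at h
            subst h
            simp [smul_eq_mul]
        have hmem1 : (fun _ => (1 : ℝ) : Fin n → ℝ) ∈ LinearMap.ker L.mulVecLin := by
          simp [LinearMap.mem_ker, Matrix.mulVecLin_apply, hone]
        have hker_eq : LinearMap.ker L.mulVecLin
            = Submodule.span ℝ {(fun _ => (1 : ℝ) : Fin n → ℝ)} := by
          refine le_antisymm hker_le ?_
          rw [Submodule.span_le, Set.singleton_subset_iff]
          exact hmem1
        have hnul : Module.finrank ℝ (LinearMap.ker L.mulVecLin) = 1 := by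
          rw [hker_eq, finrank_span_singleton hone_ne]
        have h1 := LinearMap.finrank_range_add_finrank_ker L.mulVecLin
        rw [hfinrank_pi, hnul] at h1
        have hrank' : Module.finrank ℝ (LinearMap.range L.mulVecLin) = n - 1 := by omega
        exact hrank'
end

section
/- Let L ∈ ℝ^{n×n} be a symmetric matrix with zero row sums. Then L is positive semi-definite and has rank n−1 if and only if the submatrix L_{S,S} is positive definite for every nonempty proper subset S ⊊ {1,…,n}. -/
open Finset Matrix

private lemma ext_quad_aux (n : ℕ) (L : Matrix (Fin n) (Fin n) ℝ) (S : Finset (Fin n))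
    (x : {a // a ∈ S} → ℝ) :
    (fun i => if h : i ∈ S then x ⟨i, h⟩ else 0) ⬝ᵥ
      L *ᵥ (fun i => if h : i ∈ S then x ⟨i, h⟩ else 0) =
    x ⬝ᵥ (L.submatrix (fun i : {a // a ∈ S} => (i : Fin n))
        (fun j : {a // a ∈ S} => (j : Fin n))) *ᵥ x := by
  classical
  set y : Fin n → ℝ := fun i => if h : i ∈ S then x ⟨i, h⟩ else 0 with hy
  have hinner : ∀ i : Fin n, (∑ j, L i j * y j) = ∑ b : {a // a ∈ S}, L i b * x b := by
    intro i
    have h1 : ∑ j, L i j * y j = ∑ j ∈ S, L i j * y j := by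
      refine (Finset.sum_subset (Finset.subset_univ S) ?_).symm
      intro j _ hj
      simp [hy, dif_neg hj]
    rw [h1, ← Finset.sum_coe_sort S (fun j => L i j * y j)]
    refine Finset.sum_congr rfl fun j _ => ?_
    rw [hy]
    simp [dif_pos j.2]
  have houter : ∑ i, y i * (∑ j, L i j * y j) =
      ∑ a : {a // a ∈ S}, x a * (∑ b : {a // a ∈ S}, L a b * x b) := by
    have h1 : ∑ i, y i * (∑ j, L i j * y j) = ∑ i ∈ S, y i * (∑ j, L i j * y j) := by
      refine (Finset.sum_subset (Finset.subset_univ S) ?_).symm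
      intro i _ hi
      simp [hy, dif_neg hi]
    rw [h1, ← Finset.sum_coe_sort S (fun i => y i * (∑ j, L i j * y j))]
    refine Finset.sum_congr rfl fun a _ => ?_
    rw [hinner a]
    congr 1
    rw [hy]
    simp [dif_pos a.2]
  simpa [dotProduct, Matrix.mulVec, Matrix.submatrix] using houter

/-- A symmetric zero-row-sum matrix `L ∈ ℝ^{n×n}` is positive
semi-definite of rank `n-1` iff all proper principal submatrices `L_{S,S}`
(for nonempty proper subsets `S ⊊ {1,…,n}`) are positive definite. -/
theorem zero_row_sum_posSemidef_rank_iff_proper_principal_submatrices_posDef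
    (n : ℕ) (L : Matrix (Fin n) (Fin n) ℝ) (hsym : L.IsSymm)
    (hrow : ∀ i, ∑ j, L i j = 0) :
    (L.PosSemidef ∧ L.rank = n - 1) ↔
      ∀ S : Finset (Fin n), S.Nonempty → S ≠ Finset.univ →
        (L.submatrix (fun i : {x // x ∈ S} => (i : Fin n))
          (fun j : {x // x ∈ S} => (j : Fin n))).PosDef := by
  classical
  have hherm : L.IsHermitian := by
    rw [Matrix.IsHermitian, Matrix.conjTranspose_eq_transpose_of_trivial]; exact hsym
  have hL1 : L *ᵥ (fun _ => (1 : ℝ)) = 0 := by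
    funext i
    simp [Matrix.mulVec, dotProduct, hrow i]
  have hcol : ∀ j, ∑ i, L i j = 0 := by
    intro j
    have : ∑ i, L i j = ∑ i, L j i :=
      Finset.sum_congr rfl fun i _ => hsym.apply j i
    rw [this, hrow j]
  have h1Lw : ∀ w : Fin n → ℝ, (fun _ => (1 : ℝ)) ⬝ᵥ L *ᵥ w = 0 := by
    intro w
    simp only [dotProduct, Matrix.mulVec, one_mul]
    rw [Finset.sum_comm]
    simp [← Finset.sum_mul, hcol]
  have hquad : ∀ (w : Fin n → ℝ) (c : ℝ),
      (w + c • (fun _ => (1 : ℝ))) ⬝ᵥ L *ᵥ (w + c • (fun _ => (1 : ℝ))) = w ⬝ᵥ L *ᵥ w := by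
    intro w c
    rw [Matrix.mulVec_add, Matrix.mulVec_smul, hL1, smul_zero, add_zero,
      add_dotProduct, smul_dotProduct, h1Lw, smul_zero, add_zero]
  constructor
  · rintro ⟨hpsd, hrank⟩ S hS hSne
    obtain ⟨i₀, hi₀⟩ := hS
    have hn : 0 < n := i₀.pos
    -- kernel has dimension 1
    have hrn := LinearMap.finrank_range_add_finrank_ker L.mulVecLin
    have hrange : Module.finrank ℝ (LinearMap.range L.mulVecLin) = L.rank := rfl
    have hdim : Module.finrank ℝ (Fin n → ℝ) = n := by simp
    have hker1 : Module.finrank ℝ (LinearMap.ker L.mulVecLin) = 1 := by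
      rw [hrange, hdim, hrank] at hrn
      omega
    have hone_ne : (fun _ => (1 : ℝ)) ≠ (0 : Fin n → ℝ) := by
      intro h
      have := congrFun h i₀
      simp at this
    have hle : (ℝ ∙ (fun _ => (1 : ℝ) : Fin n → ℝ)) ≤ LinearMap.ker L.mulVecLin := by
      rw [Submodule.span_singleton_le_iff_mem, LinearMap.mem_ker, Matrix.mulVecLin_apply, hL1]
    have hspan1 : Module.finrank ℝ (ℝ ∙ (fun _ => (1 : ℝ) : Fin n → ℝ)) = 1 :=
      finrank_span_singleton hone_ne
    have hkereq : (ℝ ∙ (fun _ => (1 : ℝ) : Fin n → ℝ)) = LinearMap.ker L.mulVecLin :=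
      Submodule.eq_of_le_of_finrank_le hle (by rw [hker1, hspan1])
    refine Matrix.PosDef.of_dotProduct_mulVec_pos ?_ ?_
    · exact hherm.submatrix _
    · intro x hx
      set y : Fin n → ℝ := fun i => if h : i ∈ S then x ⟨i, h⟩ else 0 with hy
      have hq := ext_quad_aux n L S x
      have hge : 0 ≤ y ⬝ᵥ L *ᵥ y := by
        have := hpsd.dotProduct_mulVec_nonneg y
        simpa using this
      have hne : y ⬝ᵥ L *ᵥ y ≠ 0 := by
        intro h0
        have hker : L *ᵥ y = 0 := by
          have := (hpsd.dotProduct_mulVec_zero_iff y).mp (by simpa using h0)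
          exact this
        have hymem : y ∈ LinearMap.ker L.mulVecLin := by
          rw [LinearMap.mem_ker, Matrix.mulVecLin_apply, hker]
        rw [← hkereq, Submodule.mem_span_singleton] at hymem
        obtain ⟨c, hc⟩ := hymem
        obtain ⟨j, hj⟩ : ∃ j, j ∉ S := by
          by_contra h
          push_neg at h
          exact hSne (Finset.eq_univ_iff_forall.mpr h)
        have hc0 : c = 0 := by
          have := congrFun hc j
          simpa [hy, dif_neg hj] using this
        have hy0 : y = 0 := by rw [← hc, hc0, zero_smul]
        apply hx
        funext a
        have := congrFun hy0 a
        simpa [hy, dif_pos a.2] using this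
      have : 0 < y ⬝ᵥ L *ᵥ y := lt_of_le_of_ne hge (Ne.symm hne)
      rw [hq] at this
      simpa using this
  · intro hall
    rcases Nat.eq_zero_or_pos n with hn | hn
    · subst hn
      refine ⟨Matrix.PosSemidef.of_dotProduct_mulVec_nonneg hherm fun x => by simp [dotProduct], ?_⟩
      have := L.rank_le_card_width
      simp at this
      omega
    · set i₀ : Fin n := ⟨0, hn⟩
      have hpos : ∀ w : Fin n → ℝ, w ≠ 0 → w i₀ = 0 → 0 < w ⬝ᵥ L *ᵥ w := by
        intro w hw h0
        set S : Finset (Fin n) := Finset.univ.filter (fun i => w i ≠ 0) with hSdef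
        have hSne : S.Nonempty := by
          obtain ⟨i, hi⟩ := Function.ne_iff.mp hw
          exact ⟨i, by simpa [hSdef] using hi⟩
        have hSuniv : S ≠ Finset.univ := by
          intro h
          have : i₀ ∈ S := h ▸ Finset.mem_univ i₀
          simp [hSdef, h0] at this
        have hpd := hall S hSne hSuniv
        set x : {a // a ∈ S} → ℝ := fun a => w a with hxdef
        have hx : x ≠ 0 := by
          obtain ⟨i, hi⟩ := hSne
          intro h
          have := congrFun h ⟨i, hi⟩
          simp only [hxdef, Pi.zero_apply] at this
          have hi' : w i ≠ 0 := by simpa [hSdef] using hi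
          exact hi' this
        have hlt := hpd.dotProduct_mulVec_pos hx
        have hwx : (fun i => if h : i ∈ S then x ⟨i, h⟩ else 0) = w := by
          funext i
          by_cases h : i ∈ S
          · simp [dif_pos h, hxdef]
          · have : w i = 0 := by
              by_contra h'
              exact h (by simpa [hSdef] using h')
            simp [dif_neg h, this]
        have hq := ext_quad_aux n L S x
        rw [hwx] at hq
        rw [hq]
        simpa using hlt
      have hdecomp : ∀ v : Fin n → ℝ,
          v ⬝ᵥ L *ᵥ v = (v - v i₀ • (fun _ => (1 : ℝ))) ⬝ᵥ L *ᵥ (v - v i₀ • (fun _ => (1 : ℝ))) := by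
        intro v
        have := hquad (v - v i₀ • (fun _ => (1 : ℝ))) (v i₀)
        rw [sub_add_cancel] at this
        exact this
      have hwi₀ : ∀ v : Fin n → ℝ, ((v - v i₀ • (fun _ => (1 : ℝ)) : Fin n → ℝ)) i₀ = 0 := by
        intro v; simp
      have hpsd : L.PosSemidef := by
        refine Matrix.PosSemidef.of_dotProduct_mulVec_nonneg hherm fun v => ?_
        rw [show star v = v from star_trivial v, hdecomp v]
        set w := v - v i₀ • (fun _ => (1 : ℝ)) with hwdef
        by_cases hw : w = 0
        · rw [hw]; simp
        · exact le_of_lt (hpos w hw (hwi₀ v))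
      refine ⟨hpsd, ?_⟩
      -- kernel equals span of ones
      have hkereq : LinearMap.ker L.mulVecLin = (ℝ ∙ (fun _ => (1 : ℝ) : Fin n → ℝ)) := by
        apply le_antisymm
        · intro v hv
          rw [LinearMap.mem_ker, Matrix.mulVecLin_apply] at hv
          have hq0 : v ⬝ᵥ L *ᵥ v = 0 := by rw [hv]; simp
          set w := v - v i₀ • (fun _ => (1 : ℝ)) with hwdef
          have hw0 : w = 0 := by
            by_contra hw
            have := hpos w hw (hwi₀ v)
            rw [← hdecomp v, hq0] at this
            exact lt_irrefl _ this
          rw [Submodule.mem_span_singleton]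
          refine ⟨v i₀, ?_⟩
          have : v = v i₀ • (fun _ => (1 : ℝ)) := by
            have := sub_eq_zero.mp hw0
            exact this
          exact this.symm
        · rw [Submodule.span_singleton_le_iff_mem, LinearMap.mem_ker, Matrix.mulVecLin_apply, hL1]
      have hone_ne : (fun _ => (1 : ℝ)) ≠ (0 : Fin n → ℝ) := by
        intro h
        have := congrFun h i₀
        simp at this
      have hker1 : Module.finrank ℝ (LinearMap.ker L.mulVecLin) = 1 := by
        rw [hkereq]; exact finrank_span_singleton hone_ne
      have hrn := LinearMap.finrank_range_add_finrank_ker L.mulVecLin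
      have hdim : Module.finrank ℝ (Fin n → ℝ) = n := by simp
      have hrange : Module.finrank ℝ (LinearMap.range L.mulVecLin) = L.rank := rfl
      rw [hrange, hker1, hdim] at hrn
      omega
end

section
/- Let L ∈ ℝ^{n×n} be a symmetric matrix with zero row sums. Then L is positive semi-definite and has rank n−1 if and only if [L]_{S,S} > 0 for every leading index set S = {1,…,k} with k ∈ {1,…,n−1}. -/
open Finset

namespace ZRSAux

open Matrix

lemma castSucc_comp_castLE {k m : ℕ} (h : k ≤ m) :
    (Fin.castSucc ∘ Fin.castLE h : Fin k → Fin (m + 1)) =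
      Fin.castLE (h.trans (Nat.le_succ m)) :=
  funext fun _ => Fin.ext rfl

lemma isHermitian_of_isSymm {m : ℕ} {M : Matrix (Fin m) (Fin m) ℝ} (h : M.IsSymm) :
    M.IsHermitian := by
  ext i j
  simpa [Matrix.conjTranspose_apply] using congrFun (congrFun h i) j

lemma posSemidef_fin_one {S : Matrix (Fin 1) (Fin 1) ℝ} (h : 0 ≤ S 0 0) : S.PosSemidef := by
  refine PosSemidef.of_dotProduct_mulVec_nonneg ?_ ?_
  · ext i j
    fin_cases i <;> fin_cases j <;> simp [Matrix.conjTranspose_apply]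
  · intro x
    simp only [star_trivial, dotProduct, mulVec, Fin.sum_univ_one]
    nlinarith [sq_nonneg (x 0), h]

lemma posDef_of_det_ne_zero {m : ℕ} {M : Matrix (Fin m) (Fin m) ℝ}
    (h : M.PosSemidef) (hdet : M.det ≠ 0) : M.PosDef := by
  refine PosDef.of_dotProduct_mulVec_pos h.1 fun x hx => ?_
  rcases (h.dotProduct_mulVec_nonneg x).lt_or_eq with h' | h'
  · exact h'
  · exfalso
    have hz : M *ᵥ x = 0 := (h.dotProduct_mulVec_zero_iff x).mp h'.symm
    exact hdet (Matrix.exists_mulVec_eq_zero_iff.mp ⟨x, hx, hz⟩)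

lemma quad_restrict {m : ℕ} (L : Matrix (Fin (m + 1)) (Fin (m + 1)) ℝ) (x : Fin (m + 1) → ℝ)
    (hx : x (Fin.last m) = 0) :
    x ⬝ᵥ L *ᵥ x =
      (x ∘ Fin.castSucc) ⬝ᵥ (L.submatrix Fin.castSucc Fin.castSucc) *ᵥ (x ∘ Fin.castSucc) := by
  simp only [dotProduct, mulVec, submatrix_apply, Function.comp_apply]
  rw [Fin.sum_univ_castSucc (n := m), hx, zero_mul, add_zero]
  refine Finset.sum_congr rfl fun i _ => ?_
  rw [Fin.sum_univ_castSucc (n := m), hx, mul_zero, add_zero]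

lemma posDef_submatrix_castSucc {m : ℕ} {M : Matrix (Fin (m + 1)) (Fin (m + 1)) ℝ}
    (hM : M.PosDef) : (M.submatrix Fin.castSucc Fin.castSucc).PosDef := by
  refine PosDef.of_dotProduct_mulVec_pos (hM.1.submatrix _) fun y hy => ?_
  have hx : (Fin.snoc y 0 : Fin (m + 1) → ℝ) ≠ 0 := by
    intro h
    apply hy
    funext i
    simpa using congrFun h i.castSucc
  have hpos := hM.dotProduct_mulVec_pos hx
  have hl : (Fin.snoc y 0 : Fin (m + 1) → ℝ) (Fin.last m) = 0 := Fin.snoc_last _ _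
  have hc : (Fin.snoc y 0 : Fin (m + 1) → ℝ) ∘ Fin.castSucc = y := by
    funext i
    simp
  rw [star_trivial] at hpos ⊢
  rw [← hc]
  rw [← quad_restrict M _ hl]
  exact hpos

lemma posDef_submatrix_castLE :
    ∀ (n : ℕ) (M : Matrix (Fin n) (Fin n) ℝ), M.PosDef → ∀ (k : ℕ) (h : k ≤ n),
      (M.submatrix (Fin.castLE h) (Fin.castLE h)).PosDef := by
  intro n
  induction n with
  | zero =>
    intro M hM k h
    obtain rfl : k = 0 := Nat.le_zero.mp h
    refine PosDef.of_dotProduct_mulVec_pos (hM.1.submatrix _) fun x hx => absurd (funext fun i => i.elim0) hx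
  | succ n ih =>
    intro M hM k h
    rcases Nat.eq_or_lt_of_le h with rfl | h'
    · have he : (Fin.castLE h : Fin (n + 1) → Fin (n + 1)) = id := funext fun i => Fin.ext rfl
      rw [he, submatrix_id_id]
      exact hM
    · have h'' : k ≤ n := Nat.lt_succ_iff.mp h'
      have heq : M.submatrix (Fin.castLE h) (Fin.castLE h) =
          (M.submatrix Fin.castSucc Fin.castSucc).submatrix (Fin.castLE h'') (Fin.castLE h'') := by
        rw [submatrix_submatrix, castSucc_comp_castLE h'']
      rw [heq]
      exact ih _ (posDef_submatrix_castSucc hM) k h''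

lemma sylvester :
    ∀ (n : ℕ) (M : Matrix (Fin n) (Fin n) ℝ), M.IsSymm →
      (∀ (k : ℕ), 1 ≤ k → ∀ (h : k ≤ n), 0 < (M.submatrix (Fin.castLE h) (Fin.castLE h)).det) →
      M.PosDef := by
  intro n
  induction n with
  | zero =>
    intro M hs _
    exact PosDef.of_dotProduct_mulVec_pos (isHermitian_of_isSymm hs) fun x hx => absurd (funext fun i => i.elim0) hx
  | succ m ih =>
    intro M hsym hmin
    have hsa : ∀ i j, M j i = M i j := fun i j => congrFun (congrFun hsym i) j
    set A := M.submatrix (Fin.castSucc : Fin m → Fin (m + 1)) Fin.castSucc with hA_def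
    have hA : A.PosDef := by
      apply ih
      · exact hsym.submatrix _
      · intro k hk1 hk
        have heq : A.submatrix (Fin.castLE hk) (Fin.castLE hk) =
            M.submatrix (Fin.castLE (hk.trans (Nat.le_succ m)))
              (Fin.castLE (hk.trans (Nat.le_succ m))) := by
          rw [hA_def, submatrix_submatrix, castSucc_comp_castLE hk]
        rw [heq]
        exact hmin k hk1 _
    haveI : Invertible A := hA.isUnit.invertible
    have hdetM : 0 < M.det := by
      have hpos := hmin (m + 1) (by omega) (le_refl (m + 1))
      have he : (Fin.castLE (le_refl (m + 1)) : Fin (m + 1) → Fin (m + 1)) = id :=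
        funext fun i => Fin.ext rfl
      rwa [he, submatrix_id_id] at hpos
    set B : Matrix (Fin m) (Fin 1) ℝ := Matrix.of fun i _ => M i.castSucc (Fin.last m) with hB_def
    set D : Matrix (Fin 1) (Fin 1) ℝ :=
      Matrix.of fun _ _ => M (Fin.last m) (Fin.last m) with hD_def
    have hblocks : M.submatrix finSumFinEquiv finSumFinEquiv = fromBlocks A B Bᴴ D := by
      ext i j
      cases i with
      | inl i =>
        cases j with
        | inl j =>
          simp only [submatrix_apply, finSumFinEquiv_apply_left, fromBlocks_apply₁₁, hA_def]
          rfl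
        | inr j =>
          obtain rfl := Subsingleton.elim j 0
          simp only [submatrix_apply, finSumFinEquiv_apply_left, finSumFinEquiv_apply_right,
            fromBlocks_apply₁₂, hB_def, of_apply]
          rfl
      | inr i =>
        obtain rfl := Subsingleton.elim i 0
        cases j with
        | inl j =>
          simp only [submatrix_apply, finSumFinEquiv_apply_left, finSumFinEquiv_apply_right,
            fromBlocks_apply₂₁, conjTranspose_apply, hB_def, of_apply, star_trivial]
          exact hsa _ _
        | inr j =>
          obtain rfl := Subsingleton.elim j 0
          simp only [submatrix_apply, finSumFinEquiv_apply_right, fromBlocks_apply₂₂, hD_def,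
            of_apply]
          rfl
    have hdetN : (fromBlocks A B Bᴴ D).det = M.det := by
      rw [← hblocks, det_submatrix_equiv_self]
    have hdetS : 0 < (D - Bᴴ * ⅟A * B).det := by
      have h1 : M.det = A.det * (D - Bᴴ * ⅟A * B).det := by
        rw [← hdetN, det_fromBlocks₁₁]
      have hdA := hA.det_pos
      by_contra hle
      push_neg at hle
      nlinarith
    have hS : (D - Bᴴ * A⁻¹ * B).PosSemidef := by
      have hinv : (⅟A : Matrix (Fin m) (Fin m) ℝ) = A⁻¹ := invOf_eq_nonsing_inv A
      apply posSemidef_fin_one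
      have hd : (D - Bᴴ * A⁻¹ * B).det = (D - Bᴴ * A⁻¹ * B) 0 0 := det_fin_one _
      rw [← hd, ← hinv]
      exact le_of_lt hdetS
    have hN : (fromBlocks A B Bᴴ D).PosSemidef := (PosDef.fromBlocks₁₁ B D hA).mpr hS
    have hMpsd : M.PosSemidef := by
      rw [← hblocks] at hN
      exact (posSemidef_submatrix_equiv finSumFinEquiv).mp hN
    exact posDef_of_det_ne_zero hMpsd (ne_of_gt hdetM)

end ZRSAux

open Matrix ZRSAux in
/-- A symmetric zero-row-sum matrix `L ∈ ℝ^{n×n}` is positive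
semi-definite of rank `n-1` iff all leading principal minors `[L]_{S,S}` with
`S = {1,…,k}`, `1 ≤ k ≤ n-1`, are positive. -/
theorem zero_row_sum_posSemidef_rank_iff_leading_principal_minors_pos
    (n : ℕ) (L : Matrix (Fin n) (Fin n) ℝ) (hsym : L.IsSymm)
    (hrow : ∀ i, ∑ j, L i j = 0) :
    (L.PosSemidef ∧ L.rank = n - 1) ↔
      ∀ (k : ℕ) (_ : 1 ≤ k) (hk : k ≤ n - 1),
        0 < (L.submatrix (Fin.castLE (le_trans hk (Nat.sub_le n 1)))
              (Fin.castLE (le_trans hk (Nat.sub_le n 1)))).det := by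
  cases n with
  | zero =>
    constructor
    · intro _ k hk1 hk
      exact absurd (hk1.trans hk) (by omega)
    · intro _
      refine ⟨PosSemidef.of_dotProduct_mulVec_nonneg ?_ ?_, ?_⟩
      · ext i j
        exact i.elim0
      · intro x
        simp [dotProduct]
      · have hle : L.rank ≤ 0 := by simpa using L.rank_le_card_width
        omega
  | succ m =>
    have hsa : ∀ i j, L j i = L i j := fun i j => congrFun (congrFun hsym i) j
    have hherm : L.IsHermitian := isHermitian_of_isSymm hsym
    have hcol : ∀ j, ∑ i, L i j = 0 := by
      intro j
      calc ∑ i, L i j = ∑ i, L j i := Finset.sum_congr rfl fun i _ => hsa j i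
        _ = 0 := hrow j
    have hLone : L *ᵥ (fun _ => (1 : ℝ)) = 0 := by
      funext i
      simp [mulVec, dotProduct, hrow i]
    have hone_ne : (fun _ => (1 : ℝ)) ≠ (0 : Fin (m + 1) → ℝ) := by
      intro h
      exact one_ne_zero (congrFun h (Fin.last m))
    set K := LinearMap.ker L.mulVecLin with hK_def
    have hone_mem : (fun _ => (1 : ℝ)) ∈ K := by
      rw [hK_def, LinearMap.mem_ker, Matrix.mulVecLin_apply]
      exact hLone
    have hrankdef : L.rank = Module.finrank ℝ (LinearMap.range L.mulVecLin) := rfl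
    have hfr : L.rank + Module.finrank ℝ K = m + 1 := by
      have h := LinearMap.finrank_range_add_finrank_ker L.mulVecLin
      rw [Module.finrank_fintype_fun_eq_card, Fintype.card_fin] at h
      rw [hrankdef, hK_def]
      exact h
    have hquad_shift : ∀ x : Fin (m + 1) → ℝ,
        x ⬝ᵥ L *ᵥ x =
          (fun i => x i - x (Fin.last m)) ⬝ᵥ L *ᵥ (fun i => x i - x (Fin.last m)) := by
      intro x
      have hc : L *ᵥ (fun _ => x (Fin.last m)) = 0 := by
        funext i
        simp [mulVec, dotProduct, ← Finset.sum_mul, hrow i]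
      have hvm : (fun _ => x (Fin.last m)) ᵥ* L = 0 := by
        funext j
        simp [vecMul, dotProduct, ← Finset.mul_sum, hcol j]
      have hu : (fun i => x i - x (Fin.last m)) = x - (fun _ => x (Fin.last m)) := rfl
      conv_rhs => rw [hu, mulVec_sub, hc, sub_zero, sub_dotProduct,
        dotProduct_mulVec (fun _ => x (Fin.last m)) L x, hvm, zero_dotProduct, sub_zero]
    set A := L.submatrix (Fin.castSucc : Fin m → Fin (m + 1)) Fin.castSucc with hA_def
    constructor
    · rintro ⟨hpsd, hrank⟩ k hk1 hk
      have hk' : k ≤ m := hk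
      have hrk : L.rank = m := by simpa using hrank
      have hkerdim : Module.finrank ℝ K = 1 := by omega
      have hker_eq : Submodule.span ℝ {(fun _ => (1 : ℝ) : Fin (m + 1) → ℝ)} = K :=
        Submodule.eq_of_le_of_finrank_le
          (Submodule.span_le.mpr (Set.singleton_subset_iff.mpr hone_mem))
          (le_of_eq (by rw [hkerdim, finrank_span_singleton hone_ne]))
      have hAposdef : A.PosDef := by
        refine PosDef.of_dotProduct_mulVec_pos (hherm.submatrix _) fun y hy => ?_
        set x : Fin (m + 1) → ℝ := Fin.snoc y 0 with hxdef
        have hxl : x (Fin.last m) = 0 := Fin.snoc_last _ _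
        have hxc : x ∘ Fin.castSucc = y := by
          funext i
          simp [hxdef]
        have hq : y ⬝ᵥ A *ᵥ y = x ⬝ᵥ L *ᵥ x := by
          rw [quad_restrict L x hxl, hxc]
        have h0 : 0 ≤ x ⬝ᵥ L *ᵥ x := by simpa using hpsd.dotProduct_mulVec_nonneg x
        rw [star_trivial, hq]
        rcases h0.lt_or_eq with hlt | he
        · exact hlt
        · exfalso
          have hz : L *ᵥ x = 0 := (hpsd.dotProduct_mulVec_zero_iff x).mp (by simpa using he.symm)
          have hxK : x ∈ K := by
            rw [hK_def, LinearMap.mem_ker, Matrix.mulVecLin_apply]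
            exact hz
          rw [← hker_eq, Submodule.mem_span_singleton] at hxK
          obtain ⟨c, hc⟩ := hxK
          have hc0 : c = 0 := by
            have := congrFun hc (Fin.last m)
            simpa [hxl] using this
          apply hy
          rw [← hxc]
          funext i
          have := congrFun hc i.castSucc
          simp only [hc0, zero_smul, Pi.zero_apply] at this
          simpa using this.symm
      have heq : L.submatrix (Fin.castLE (le_trans hk (Nat.sub_le (m + 1) 1)))
            (Fin.castLE (le_trans hk (Nat.sub_le (m + 1) 1))) =
          A.submatrix (Fin.castLE hk') (Fin.castLE hk') := by
        rw [hA_def, submatrix_submatrix, castSucc_comp_castLE hk']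
      rw [heq]
      exact (posDef_submatrix_castLE m A hAposdef k hk').det_pos
    · intro hmin
      have hAposdef : A.PosDef := by
        apply sylvester m A (hsym.submatrix _)
        intro k hk1 hk
        have heq : A.submatrix (Fin.castLE hk) (Fin.castLE hk) =
            L.submatrix (Fin.castLE (hk.trans (Nat.le_succ m)))
              (Fin.castLE (hk.trans (Nat.le_succ m))) := by
          rw [hA_def, submatrix_submatrix, castSucc_comp_castLE hk]
        rw [heq]
        exact hmin k hk1 hk
      have hpsd : L.PosSemidef := by
        refine PosSemidef.of_dotProduct_mulVec_nonneg hherm fun x => ?_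
        rw [star_trivial, hquad_shift x]
        have hul : (fun i => x i - x (Fin.last m)) (Fin.last m) = 0 := sub_self _
        rw [quad_restrict L _ hul]
        simpa using hAposdef.posSemidef.dotProduct_mulVec_nonneg ((fun i => x i - x (Fin.last m)) ∘ Fin.castSucc)
      refine ⟨hpsd, ?_⟩
      have hker_le : K ≤ Submodule.span ℝ {(fun _ => (1 : ℝ) : Fin (m + 1) → ℝ)} := by
        intro x hx
        have hLx : L *ᵥ x = 0 := by
          rwa [hK_def, LinearMap.mem_ker, Matrix.mulVecLin_apply] at hx
        have hq0 : x ⬝ᵥ L *ᵥ x = 0 := by rw [hLx, dotProduct_zero]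
        have hul : (fun i => x i - x (Fin.last m)) (Fin.last m) = 0 := sub_self _
        have h2 : ((fun i => x i - x (Fin.last m)) ∘ Fin.castSucc) ⬝ᵥ
            A *ᵥ ((fun i => x i - x (Fin.last m)) ∘ Fin.castSucc) = 0 := by
          rw [← quad_restrict L _ hul, ← hquad_shift x]
          exact hq0
        have hy0 : (fun i => x i - x (Fin.last m)) ∘ Fin.castSucc = 0 := by
          by_contra hne
          exact absurd h2 (ne_of_gt (by simpa using hAposdef.dotProduct_mulVec_pos hne))
        have hu0 : ∀ i, x i - x (Fin.last m) = 0 := by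
          intro i
          induction i using Fin.lastCases with
          | last => exact hul
          | cast j => exact congrFun hy0 j
        rw [Submodule.mem_span_singleton]
        refine ⟨x (Fin.last m), funext fun i => ?_⟩
        have := hu0 i
        simp only [Pi.smul_apply, smul_eq_mul, mul_one]
        linarith
      have hker_eq : K = Submodule.span ℝ {(fun _ => (1 : ℝ) : Fin (m + 1) → ℝ)} :=
        le_antisymm hker_le (Submodule.span_le.mpr (Set.singleton_subset_iff.mpr hone_mem))
      have hkd : Module.finrank ℝ K = 1 := by
        rw [hker_eq, finrank_span_singleton hone_ne]
      omega
end

section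
/- Let L ∈ ℝ^{n×n} be a symmetric matrix with zero row sums. Then L is positive semi-definite and has rank n−1 if and only if the leading principal submatrix L_{S,S} with S = {1,…,n−1} is positive definite. -/
open Finset Matrix

/-- A symmetric zero-row-sum matrix `L ∈ ℝ^{n×n}` is positive
semi-definite of rank `n-1` iff the leading principal submatrix `L_{S,S}` with
`S = {1,…,n-1}` is positive definite. -/
theorem zero_row_sum_posSemidef_rank_iff_leading_principal_submatrix_posDef
    (n : ℕ) (L : Matrix (Fin n) (Fin n) ℝ) (hsym : L.IsSymm)
    (hrow : ∀ i, ∑ j, L i j = 0) :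
    (L.PosSemidef ∧ L.rank = n - 1) ↔
      (L.submatrix (Fin.castLE (Nat.sub_le n 1))
        (Fin.castLE (Nat.sub_le n 1))).PosDef := by
  obtain _ | k := n
  · constructor
    · intro _
      refine Matrix.PosDef.of_dotProduct_mulVec_pos (Matrix.IsHermitian.submatrix ?_ _) fun x hx => (hx (funext fun i => absurd i.isLt (by omega))).elim
      rw [Matrix.IsHermitian, Matrix.conjTranspose_eq_transpose_of_trivial]; exact hsym
    · intro _
      refine ⟨Matrix.PosSemidef.of_dotProduct_mulVec_nonneg ?_ fun x => ?_, ?_⟩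
      · rw [Matrix.IsHermitian, Matrix.conjTranspose_eq_transpose_of_trivial]; exact hsym
      · simp [dotProduct]
      · rw [Subsingleton.elim L 0, Matrix.rank_zero]

  -- main case: n = k + 1
  · set c : Fin (k + 1 - 1) → Fin (k + 1) := Fin.castLE (Nat.sub_le (k+1) 1) with hc
    have hcs : ∀ i : Fin k, c i = i.castSucc := fun i => rfl
    have hherm : L.IsHermitian := by
      rw [Matrix.IsHermitian, Matrix.conjTranspose_eq_transpose_of_trivial]; exact hsym
    have h1 : L *ᵥ (1 : Fin (k+1) → ℝ) = 0 := by
      funext i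
      simpa [Matrix.mulVec, dotProduct] using hrow i
    have hvec1 : (1 : Fin (k+1) → ℝ) ᵥ* L = 0 := by
      funext j
      have : ∑ i, L i j = 0 := by
        rw [← hrow j]
        exact Finset.sum_congr rfl fun i _ => hsym.apply j i
      simpa [Matrix.vecMul, dotProduct] using this
    let E : (Fin k → ℝ) → (Fin (k+1) → ℝ) := fun v => Fin.snoc v 0
    have hE_cast : ∀ (v : Fin k → ℝ) (i : Fin k), E v i.castSucc = v i := by
      intro v i; simp [E]
    have hE_last : ∀ (v : Fin k → ℝ), E v (Fin.last k) = 0 := by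
      intro v; simp [E]
    have sumE : ∀ (v : Fin k → ℝ) (g : Fin (k+1) → ℝ),
        ∑ i, E v i * g i = ∑ i : Fin k, v i * g i.castSucc := by
      intro v g
      rw [Fin.sum_univ_castSucc, hE_last, zero_mul, add_zero]
      exact Finset.sum_congr rfl fun i _ => by rw [hE_cast]
    have key : ∀ v : Fin k → ℝ,
        E v ⬝ᵥ L *ᵥ E v
          = v ⬝ᵥ (L.submatrix c c) *ᵥ v := by
      intro v
      simp only [dotProduct, Matrix.mulVec, Matrix.submatrix_apply]
      rw [sumE v]
      refine Finset.sum_congr rfl fun i _ => ?_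
      congr 1
      calc ∑ j, L i.castSucc j * E v j
          = ∑ j, E v j * L i.castSucc j := by
            exact Finset.sum_congr rfl fun j _ => mul_comm _ _
        _ = ∑ j : Fin k, v j * L i.castSucc j.castSucc := sumE v _
        _ = ∑ j : Fin k, L (c i) (c j) * v j := by
            exact Finset.sum_congr rfl fun j _ => by rw [hcs, hcs, mul_comm]
    have hshift : ∀ (x : Fin (k+1) → ℝ) (t : ℝ),
        (x + t • 1) ⬝ᵥ L *ᵥ (x + t • 1) = x ⬝ᵥ L *ᵥ x := by
      intro x t
      rw [Matrix.mulVec_add, Matrix.mulVec_smul, h1, smul_zero, add_zero,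
        add_dotProduct, smul_dotProduct, Matrix.dotProduct_mulVec 1,
        hvec1, zero_dotProduct, smul_zero, add_zero]
    have hdec : ∀ x : Fin (k+1) → ℝ,
        x = E (fun i : Fin k => x i.castSucc - x (Fin.last k))
            + x (Fin.last k) • 1 := by
      intro x
      funext i
      induction i using Fin.lastCases with
      | last => simp [hE_last]
      | cast i => simp [hE_cast]
    have hone : (1 : Fin (k+1) → ℝ) ≠ 0 := fun h => one_ne_zero (congrFun h 0)
    have hspan_le : Submodule.span ℝ {(1 : Fin (k+1) → ℝ)} ≤ LinearMap.ker L.mulVecLin := by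
      rw [Submodule.span_le, Set.singleton_subset_iff]
      simpa [LinearMap.mem_ker] using h1
    have hrn := LinearMap.finrank_range_add_finrank_ker L.mulVecLin
    rw [Module.finrank_pi, Fintype.card_fin] at hrn
    constructor
    · rintro ⟨hpsd, hrank⟩
      have hker : LinearMap.ker L.mulVecLin = Submodule.span ℝ {(1 : Fin (k+1) → ℝ)} := by
        refine (Submodule.eq_of_le_of_finrank_eq hspan_le ?_).symm
        rw [finrank_span_singleton hone]
        have : L.rank = k := by simpa using hrank
        rw [Matrix.rank] at this
        omega
      refine Matrix.PosDef.of_dotProduct_mulVec_pos (hherm.submatrix _) fun v hv => ?_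
      have hge : 0 ≤ v ⬝ᵥ (L.submatrix c c) *ᵥ v := by
        rw [← key v]
        simpa using hpsd.dotProduct_mulVec_nonneg (E v)
      rcases hge.lt_or_eq with h | h
      · simpa using h
      · exfalso
        have hz : L *ᵥ E v = 0 := by
          rw [← (hpsd.dotProduct_mulVec_zero_iff (E v))]
          simpa using (key v).trans h.symm
        have : E v ∈ Submodule.span ℝ {(1 : Fin (k+1) → ℝ)} := by
          rw [← hker]
          simpa [LinearMap.mem_ker] using hz
        obtain ⟨t, ht⟩ := Submodule.mem_span_singleton.mp this
        have hlast := congrFun ht (Fin.last k)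
        rw [hE_last] at hlast
        have ht0 : t = 0 := by simpa using hlast
        apply hv
        funext i
        have hi := congrFun ht i.castSucc
        rw [hE_cast, ht0] at hi
        simpa using hi.symm
    · intro hpd
      have hpsd : L.PosSemidef := by
        refine Matrix.PosSemidef.of_dotProduct_mulVec_nonneg hherm fun x => ?_
        have hx := hdec x
        calc (0:ℝ) ≤ (fun i : Fin k => x i.castSucc - x (Fin.last k))
              ⬝ᵥ (L.submatrix c c) *ᵥ (fun i : Fin k => x i.castSucc - x (Fin.last k)) := by
              simpa using hpd.posSemidef.dotProduct_mulVec_nonneg _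
          _ = star x ⬝ᵥ L *ᵥ x := by
              rw [← key, show (star x) = x from star_trivial x]
              conv_rhs => rw [hx]
              rw [hshift]
      refine ⟨hpsd, ?_⟩
      have hker : LinearMap.ker L.mulVecLin = Submodule.span ℝ {(1 : Fin (k+1) → ℝ)} := by
        refine le_antisymm ?_ hspan_le
        intro x hx
        rw [LinearMap.mem_ker, Matrix.mulVecLin_apply] at hx
        set v : Fin k → ℝ := fun i : Fin k => x i.castSucc - x (Fin.last k) with hv
        have hq : v ⬝ᵥ (L.submatrix c c) *ᵥ v = 0 := by
          rw [← key]
          calc E v ⬝ᵥ L *ᵥ E v = x ⬝ᵥ L *ᵥ x := by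
                conv_rhs => rw [hdec x]
                rw [hshift]
            _ = 0 := by rw [hx, dotProduct_zero]
        have hv0 : v = 0 := by
          by_contra hne
          have := hpd.dotProduct_mulVec_pos hne
          rw [star_trivial, hq] at this
          exact lt_irrefl _ this
        have hE0 : E (0 : Fin k → ℝ) = 0 := by
          funext i
          induction i using Fin.lastCases with
          | last => rw [hE_last]; rfl
          | cast i => rw [hE_cast]; rfl
        have : x = x (Fin.last k) • 1 := by
          conv_lhs => rw [hdec x]
          rw [hv.symm.trans hv0, hE0, zero_add]
        rw [this]
        exact Submodule.smul_mem _ _ (Submodule.mem_span_singleton_self _)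
      have : Module.finrank ℝ (LinearMap.ker L.mulVecLin) = 1 := by
        rw [hker, finrank_span_singleton hone]
      rw [Matrix.rank]
      omega
end

section
/- Let G = (V,E,ω) be a finite weighted undirected graph with V = {1,…,n} and let V₁, V₂ be a partition of V into two nonempty parts. Then ∑_{C ⊆ V₁} (−1)^{|C|} ω(Σ_C) [ℒ(G)]_{V₁∖C, V₁∖C} = 0, where the principal minor indexed by the empty set is taken to be 1. -/
open Finset SimpleGraph
open scoped Classical

/-- Membership in `Σ_C` (for the partition `V₁, V₁ᶜ`): `D` consists of graph edges
between `V₁` and `V₂ = V₁ᶜ`, is a forest, each `i ∈ C` is incident with exactly one edge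
of `D`, and every edge of `D` is incident with some vertex of `C`. -/
def memSigma {n : ℕ} (w : Fin n → Fin n → ℝ) (V₁ C : Finset (Fin n))
    (D : Finset (Sym2 (Fin n))) : Prop :=
  (∀ p ∈ D, ∃ i j : Fin n, p = s(i, j) ∧ i ∈ V₁ ∧ j ∉ V₁ ∧ w i j ≠ 0) ∧
  (SimpleGraph.fromEdgeSet (D : Set (Sym2 (Fin n)))).IsAcyclic ∧
  (∀ i ∈ C, ∃! p : Sym2 (Fin n), p ∈ D ∧ i ∈ p) ∧
  (∀ p ∈ D, ∃ i ∈ C, i ∈ p)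


lemma acyclic_of_star {α : Type*} (G : SimpleGraph α) (S : Set α)
    (h1 : ∀ a b, G.Adj a b → a ∈ S ∨ b ∈ S)
    (h2 : ∀ a ∈ S, ∀ b c, G.Adj a b → G.Adj a c → b = c) : G.IsAcyclic := by
  rw [SimpleGraph.isAcyclic_iff_forall_adj_isBridge]
  have key : ∀ a b, G.Adj a b → a ∈ S → G.IsBridge s(a, b) := by
    intro a b hab haS
    rw [SimpleGraph.isBridge_iff]
    rintro ⟨p⟩
    cases p with
    | nil => exact hab.ne rfl
    | @cons _ x _ h q =>
      rw [SimpleGraph.deleteEdges_adj] at h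
      have hx : x = b := h2 a haS x b h.1 hab
      subst hx
      exact h.2 (by simp [hab.ne])
  intro a b hab
  rcases h1 a b hab with haS | hbS
  · exact key a b hab haS
  · have := key b a hab.symm hbS
    rwa [Sym2.eq_swap] at this


lemma det_add_diagonal {ι : Type*} [Fintype ι] [DecidableEq ι]
    (M : Matrix ι ι ℝ) (d : ι → ℝ) :
    (M + Matrix.diagonal d).det
      = ∑ S : Finset ι, (∏ i ∈ S, d i) *
          (M.submatrix (fun x : {x // x ∉ S} => (x : ι))
            (fun x : {x // x ∉ S} => (x : ι))).det := by
  have hM : (M + Matrix.diagonal d)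
      = ((fun i => d i • (Pi.single i 1 : ι → ℝ)) + fun i => M i) := by
    ext i j
    by_cases h : i = j
    · subst h; simp [Pi.single_apply, add_comm]
    · simp [Matrix.diagonal_apply_ne _ h, Pi.single_apply, Ne.symm h, h]
  have hdet : ∀ (A : Matrix ι ι ℝ), A.det = Matrix.detRowAlternating A := fun _ => rfl
  rw [hdet, hM]
  have hcoe : (Matrix.detRowAlternating ((fun i => d i • (Pi.single i 1 : ι → ℝ)) + fun i => M i) : ℝ)
      = (Matrix.detRowAlternating (R := ℝ) (n := ι)).toMultilinearMap
          ((fun i => d i • (Pi.single i 1 : ι → ℝ)) + fun i => M i) := rfl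
  rw [hcoe, MultilinearMap.map_add_univ]
  refine Finset.sum_congr rfl fun s _ => ?_
  set m₀ : ι → ι → ℝ := s.piecewise (fun i => (Pi.single i 1 : ι → ℝ)) (fun i => M i) with hm₀
  have hpw : s.piecewise (fun i => d i • (Pi.single i 1 : ι → ℝ)) (fun i => M i)
      = s.piecewise (fun i => d i • m₀ i) m₀ := by
    funext i
    by_cases h : i ∈ s
    · simp [Finset.piecewise_eq_of_mem _ _ _ h, hm₀]
    · simp [hm₀, Finset.piecewise_eq_of_notMem _ _ _ h]
  rw [hpw]
  rw [show ((Matrix.detRowAlternating (R := ℝ) (n := ι)).toMultilinearMap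
      (s.piecewise (fun i => d i • m₀ i) m₀)) =
      (Matrix.detRowAlternating (R := ℝ) (n := ι)).toMultilinearMap
      (s.piecewise (fun i => d i • m₀ i) m₀) from rfl]
  rw [MultilinearMap.map_piecewise_smul]
  rw [smul_eq_mul]
  congr 1
  -- det m₀ = det of submatrix over complement
  have : (Matrix.detRowAlternating (R := ℝ) (n := ι)).toMultilinearMap m₀
      = (Matrix.of m₀).det := rfl
  rw [this]
  let e : {x // x ∈ s} ⊕ {x // x ∉ s} ≃ ι := Equiv.sumCompl (· ∈ s)
  rw [← Matrix.det_submatrix_equiv_self e]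
  have hblock : (Matrix.of m₀).submatrix e e =
      Matrix.fromBlocks 1 0
        (Matrix.of fun (i : {x // x ∉ s}) (j : {x // x ∈ s}) => M i j)
        (M.submatrix (fun x : {x // x ∉ s} => (x : ι)) (fun x : {x // x ∉ s} => (x : ι))) := by
    ext i j
    rcases i with i | i <;> rcases j with j | j
    · simp only [Matrix.submatrix_apply, Matrix.of_apply, hm₀, e, Equiv.sumCompl_apply_inl,
        Finset.piecewise_eq_of_mem _ _ _ i.2, Matrix.fromBlocks_apply₁₁, Pi.single_apply,
        Matrix.one_apply]
      by_cases h : i = j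
      · subst h; simp
      · rw [if_neg (fun hc => h (Subtype.ext hc.symm)), if_neg h]
    · simp only [Matrix.submatrix_apply, Matrix.of_apply, hm₀, e, Equiv.sumCompl_apply_inl,
        Equiv.sumCompl_apply_inr, Finset.piecewise_eq_of_mem _ _ _ i.2,
        Matrix.fromBlocks_apply₁₂, Pi.single_apply, Matrix.zero_apply]
      rw [if_neg (fun hc : (j:ι) = i => j.2 (hc ▸ i.2))]
    · simp [hm₀, e, Finset.piecewise_eq_of_notMem _ _ _ i.2]
    · simp [hm₀, e, Finset.piecewise_eq_of_notMem _ _ _ i.2]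
  rw [hblock, Matrix.det_fromBlocks_zero₁₂, Matrix.det_one, one_mul]


lemma sigma_sum_eq {n : ℕ} (w : Fin n → Fin n → ℝ)
    (wS : Sym2 (Fin n) → ℝ) (hwS : ∀ i j, wS s(i, j) = w i j)
    (V₁ C : Finset (Fin n)) (hC : C ⊆ V₁) :
    (∑ D ∈ Finset.univ.filter (memSigma w V₁ C), ∏ p ∈ D, wS p)
      = ∏ i ∈ C, ∑ j ∈ V₁ᶜ, w i j := by
  rw [Finset.prod_sum]
  -- split off the zero-weight functions
  rw [← Finset.sum_filter_add_sum_filter_not (C.pi fun _ => V₁ᶜ)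
      (fun φ => ∀ i (h : i ∈ C), w i (φ i h) ≠ 0)]
  have hzero : ∑ φ ∈ (C.pi fun _ => V₁ᶜ).filter
      (fun φ => ¬ ∀ i (h : i ∈ C), w i (φ i h) ≠ 0),
      ∏ x ∈ C.attach, w x.1 (φ x.1 x.2) = 0 := by
    refine Finset.sum_eq_zero fun φ hφ => ?_
    rw [Finset.mem_filter] at hφ
    push_neg at hφ
    obtain ⟨i, hi, hzero⟩ := hφ.2
    exact Finset.prod_eq_zero (Finset.mem_attach _ ⟨i, hi⟩) hzero
  rw [hzero, add_zero]
  -- now a bijection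
  refine (Finset.sum_bij
    (fun φ _ => C.attach.image (fun i => s(i.1, φ i.1 i.2))) ?_ ?_ ?_ ?_).symm
  · -- maps into the filter
    intro φ hφ
    rw [Finset.mem_filter] at hφ ⊢
    obtain ⟨hpi, hnz⟩ := hφ
    rw [Finset.mem_pi] at hpi
    have hcpl : ∀ i (h : i ∈ C), φ i h ∉ V₁ := fun i h =>
      Finset.mem_compl.mp (hpi i h)
    refine ⟨Finset.mem_univ _, ?_, ?_, ?_, ?_⟩
    · rintro p hp
      rw [Finset.mem_image] at hp
      obtain ⟨i, -, rfl⟩ := hp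
      exact ⟨i.1, φ i.1 i.2, rfl, hC i.2, hcpl i.1 i.2, hnz i.1 i.2⟩
    · refine acyclic_of_star _ (V₁ : Set (Fin n)) ?_ ?_
      · intro a b hab
        rw [SimpleGraph.fromEdgeSet_adj] at hab
        have := hab.1
        rw [Finset.mem_coe, Finset.mem_image] at this
        obtain ⟨i, -, hi⟩ := this
        rw [Sym2.eq_iff] at hi
        rcases hi with ⟨rfl, rfl⟩ | ⟨rfl, rfl⟩
        · exact Or.inl (hC i.2)
        · exact Or.inr (hC i.2)
      · intro a ha b c hab hac
        have key : ∀ x, (SimpleGraph.fromEdgeSet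
            ((C.attach.image (fun i => s(i.1, φ i.1 i.2)) : Finset (Sym2 (Fin n))) :
              Set (Sym2 (Fin n)))).Adj a x → ∃ h : a ∈ C, x = φ a h := by
          intro x hx
          rw [SimpleGraph.fromEdgeSet_adj] at hx
          have := hx.1
          rw [Finset.mem_coe, Finset.mem_image] at this
          obtain ⟨i, -, hi⟩ := this
          rw [Sym2.eq_iff] at hi
          rcases hi with ⟨h1, h2⟩ | ⟨h1, h2⟩
          · exact ⟨h1 ▸ i.2, by subst h1; exact h2.symm⟩
          · exact absurd ha (h2 ▸ hcpl i.1 i.2)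
        obtain ⟨h1, rfl⟩ := key b hab
        obtain ⟨h2, rfl⟩ := key c hac
        rfl
    · intro i hi
      refine ⟨s(i, φ i hi), ⟨Finset.mem_image.mpr ⟨⟨i, hi⟩, Finset.mem_attach _ _, rfl⟩,
        Sym2.mem_mk_left _ _⟩, ?_⟩
      rintro q ⟨hq, hiq⟩
      rw [Finset.mem_image] at hq
      obtain ⟨j, -, rfl⟩ := hq
      rw [Sym2.mem_iff] at hiq
      rcases hiq with rfl | rfl
      · rfl
      · exact absurd (hC hi) (hcpl j.1 j.2)
    · rintro p hp
      rw [Finset.mem_image] at hp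
      obtain ⟨i, -, rfl⟩ := hp
      exact ⟨i.1, i.2, Sym2.mem_mk_left _ _⟩
  · -- injectivity
    intro φ hφ ψ hψ h
    rw [Finset.mem_filter, Finset.mem_pi] at hφ hψ
    funext i hi
    have h' : C.attach.image (fun j => s(j.1, φ j.1 j.2))
        = C.attach.image (fun j => s(j.1, ψ j.1 j.2)) := h
    have hmem : s(i, φ i hi) ∈ C.attach.image (fun j => s(j.1, ψ j.1 j.2)) := by
      rw [← h', Finset.mem_image]
      exact ⟨⟨i, hi⟩, Finset.mem_attach _ _, rfl⟩
    rw [Finset.mem_image] at hmem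
    obtain ⟨⟨j, hj2⟩, -, hj⟩ := hmem
    rw [Sym2.eq_iff] at hj
    rcases hj with ⟨h1, h2⟩ | ⟨h1, h2⟩
    · dsimp at h1 h2; subst h1; exact h2.symm
    · dsimp at h1 h2
      exact absurd (hC hi) (h2 ▸ Finset.mem_compl.mp (hψ.1 j hj2))
  · -- surjectivity
    intro D hD
    rw [Finset.mem_filter] at hD
    obtain ⟨-, hD1, hD2, hD3, hD4⟩ := hD
    have hex : ∀ i, i ∈ C → ∃ j, s(i, j) ∈ D ∧ j ∈ V₁ᶜ ∧ w i j ≠ 0 := by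
      intro i hi
      obtain ⟨p, ⟨hpD, hip⟩, -⟩ := hD3 i hi
      obtain ⟨a, b, rfl, haV, hbV, hw⟩ := hD1 p hpD
      rw [Sym2.mem_iff] at hip
      rcases hip with rfl | rfl
      · exact ⟨b, hpD, Finset.mem_compl.mpr hbV, hw⟩
      · exact absurd (hC hi) hbV
    refine ⟨fun i hi => (hex i hi).choose, ?_, ?_⟩
    · rw [Finset.mem_filter, Finset.mem_pi]
      exact ⟨fun i hi => ((hex i hi).choose_spec).2.1,
        fun i hi => ((hex i hi).choose_spec).2.2⟩
    · ext p
      rw [Finset.mem_image]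
      constructor
      · rintro ⟨i, -, rfl⟩
        exact ((hex i.1 i.2).choose_spec).1
      · intro hp
        obtain ⟨i, hiC, hip⟩ := hD4 p hp
        obtain ⟨q, hq, huniq⟩ := hD3 i hiC
        have h1 : p = q := huniq p ⟨hp, hip⟩
        have h2 : s(i, (hex i hiC).choose) = q :=
          huniq _ ⟨((hex i hiC).choose_spec).1, Sym2.mem_mk_left _ _⟩
        exact ⟨⟨i, hiC⟩, Finset.mem_attach _ _, by rw [h2, ← h1]⟩
  · -- values agree
    intro φ hφ
    rw [Finset.mem_filter, Finset.mem_pi] at hφ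
    rw [Finset.prod_image]
    · exact Finset.prod_congr rfl fun i _ => (hwS i.1 (φ i.1 i.2)).symm
    · rintro i - j - h
      rw [Sym2.eq_iff] at h
      rcases h with ⟨h1, -⟩ | ⟨-, h2⟩
      · exact Subtype.ext h1
      · exact absurd (hC j.2) (h2 ▸ Finset.mem_compl.mp (hφ.1 i.1 i.2))



set_option maxHeartbeats 2000000 in
/-- For a finite weighted undirected graph on `Fin n` (symmetric
loop-free weight function `w`) and a partition of the vertex set into two nonempty parts
`V₁, V₁ᶜ`, one has `∑_{C ⊆ V₁} (-1)^{|C|} ω(Σ_C) [ℒ(G)]_{V₁∖C, V₁∖C} = 0`, where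
`ω(Σ_C) = ∑_{D ∈ Σ_C} ∏_{e ∈ D} ω(e)` and the minor indexed by the empty set is `1`. -/
theorem alternating_sum_sigma_weighted_minors_eq_zero
    (n : ℕ) (w : Fin n → Fin n → ℝ) (hsym : ∀ i j, w i j = w j i)
    (hdiag : ∀ i, w i i = 0)
    (wS : Sym2 (Fin n) → ℝ) (hwS : ∀ i j, wS s(i, j) = w i j)
    (V₁ : Finset (Fin n)) (h₁ : V₁.Nonempty) (h₂ : V₁ᶜ.Nonempty) :
    ∑ C ∈ V₁.powerset, (-1 : ℝ) ^ C.card *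
        (∑ D ∈ Finset.univ.filter (memSigma w V₁ C), ∏ p ∈ D, wS p) *
        ((Matrix.of fun i j : Fin n => if i = j then ∑ k, w i k else - w i j).submatrix
          (fun i : {x // x ∈ V₁ \ C} => (i : Fin n))
          (fun j : {x // x ∈ V₁ \ C} => (j : Fin n))).det
      = 0 := by
  set Lmat : Matrix (Fin n) (Fin n) ℝ :=
    Matrix.of fun i j : Fin n => if i = j then ∑ k, w i k else - w i j with hLmat
  set d : Fin n → ℝ := fun i => -(∑ j ∈ V₁ᶜ, w i j) with hd
  set M : Matrix {x // x ∈ V₁} {x // x ∈ V₁} ℝ :=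
    Lmat.submatrix (fun x => (x : Fin n)) (fun x => (x : Fin n)) with hM
  have step1 : ∑ C ∈ V₁.powerset, (-1 : ℝ) ^ C.card *
        (∑ D ∈ Finset.univ.filter (memSigma w V₁ C), ∏ p ∈ D, wS p) *
        (Lmat.submatrix
          (fun i : {x // x ∈ V₁ \ C} => (i : Fin n))
          (fun j : {x // x ∈ V₁ \ C} => (j : Fin n))).det
      = ∑ S : Finset {x // x ∈ V₁}, (∏ i ∈ S, d ↑i) *
          (M.submatrix (fun x : {x // x ∉ S} => (x : {x // x ∈ V₁}))
            (fun x : {x // x ∉ S} => (x : {x // x ∈ V₁}))).det := by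
    refine Finset.sum_nbij' (i := fun C => C.subtype (· ∈ V₁))
      (j := fun S => S.map (Function.Embedding.subtype _))
      (fun C _ => Finset.mem_univ _) ?_ ?_ ?_ ?_
    · intro S _
      rw [Finset.mem_powerset]
      intro x hx
      rw [Finset.mem_map] at hx
      obtain ⟨y, -, rfl⟩ := hx
      exact y.2
    · intro C hC
      show (C.subtype (· ∈ V₁)).map (Function.Embedding.subtype _) = C
      rw [Finset.subtype_map]
      exact Finset.filter_true_of_mem (fun x hx => Finset.mem_powerset.mp hC hx)
    · intro S _
      show ((S.map (Function.Embedding.subtype _)).subtype (· ∈ V₁)) = S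
      ext x
      rw [Finset.mem_subtype, Finset.mem_map]
      constructor
      · rintro ⟨y, hy, hyx⟩
        rwa [show y = x from Subtype.ext hyx] at hy
      · intro hx
        exact ⟨x, hx, rfl⟩
    · intro C hCmem
      have hC : C ⊆ V₁ := Finset.mem_powerset.mp hCmem
      rw [sigma_sum_eq w wS hwS V₁ C hC]
      have hcard : (C.subtype (· ∈ V₁)).card = C.card := by
        conv_rhs => rw [← Finset.filter_true_of_mem (fun x hx => hC hx),
          ← Finset.subtype_map (p := (· ∈ V₁))]
        rw [Finset.card_map]
      have hprod : ∏ i ∈ C.subtype (· ∈ V₁), d ↑i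
          = (-1 : ℝ) ^ C.card * ∏ i ∈ C, ∑ j ∈ V₁ᶜ, w i j := by
        have h1 : ∏ i ∈ C, d i
            = ∏ i ∈ C.subtype (· ∈ V₁), d ↑i := by
          conv_lhs => rw [← Finset.filter_true_of_mem (fun x hx => hC hx),
            ← Finset.subtype_map (p := (· ∈ V₁)), Finset.prod_map]
          rfl
        rw [← h1]
        calc ∏ i ∈ C, d i
            = ∏ i ∈ C, (-1 : ℝ) * (∑ j ∈ V₁ᶜ, w i j) :=
              Finset.prod_congr rfl (fun i _ => by rw [hd]; ring)
          _ = (-1 : ℝ) ^ C.card * ∏ i ∈ C, ∑ j ∈ V₁ᶜ, w i j := by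
              rw [Finset.prod_mul_distrib, Finset.prod_const]
      rw [hprod]
      congr 1
      set S := C.subtype (· ∈ V₁) with hS
      let e : {x : {x // x ∈ V₁} // x ∉ S} ≃ {x // x ∈ V₁ \ C} :=
        { toFun := fun x => ⟨↑↑x, Finset.mem_sdiff.mpr
            ⟨x.1.2, fun hc => x.2 ((Finset.mem_subtype (p := (· ∈ V₁))).mpr hc)⟩⟩
          invFun := fun x => ⟨⟨↑x, (Finset.mem_sdiff.mp x.2).1⟩,
            fun hs => (Finset.mem_sdiff.mp x.2).2 ((Finset.mem_subtype (p := (· ∈ V₁))).mp hs)⟩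
          left_inv := fun _ => rfl
          right_inv := fun _ => rfl }
      have heq : M.submatrix (fun x : {x // x ∉ S} => (x : {x // x ∈ V₁}))
            (fun x : {x // x ∉ S} => (x : {x // x ∈ V₁}))
          = (Lmat.submatrix
            (fun i : {x // x ∈ V₁ \ C} => (i : Fin n))
            (fun j : {x // x ∈ V₁ \ C} => (j : Fin n))).submatrix e e := rfl
      rw [heq, Matrix.det_submatrix_equiv_self]
  rw [step1, ← det_add_diagonal]
  refine Matrix.exists_mulVec_eq_zero_iff.mp ⟨fun _ => 1, ?_, ?_⟩
  · obtain ⟨a, ha⟩ := h₁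
    intro hcon
    exact one_ne_zero (congrFun hcon ⟨a, ha⟩)
  · funext x
    simp only [Matrix.mulVec, dotProduct, mul_one, Matrix.add_apply, Pi.zero_apply]
    rw [Finset.sum_add_distrib]
    have hdiagsum : ∑ y : {x // x ∈ V₁}, Matrix.diagonal (fun z : {x // x ∈ V₁} => d ↑z) x y
        = d ↑x := by
      simp [Matrix.diagonal_apply]
    have hrow : ∑ y : {x // x ∈ V₁}, M x y = ∑ j ∈ V₁ᶜ, w ↑x j := by
      have h0 : ∑ y : {x // x ∈ V₁}, M x y = ∑ j ∈ V₁, Lmat ↑x j :=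
        Finset.sum_coe_sort V₁ (fun j => Lmat ↑x j)
      rw [h0, ← Finset.add_sum_erase _ _ x.2]
      have h2 : ∀ j ∈ V₁.erase ↑x, Lmat ↑x j = -w ↑x j := by
        intro j hj
        simp only [hLmat, Matrix.of_apply]
        rw [if_neg (Ne.symm (Finset.ne_of_mem_erase hj))]
      rw [Finset.sum_congr rfl h2]
      have h3 : Lmat ↑x ↑x = ∑ k, w ↑x k := by
        simp [hLmat]
      rw [h3, ← Finset.sum_add_sum_compl V₁ (w ↑x)]
      have e1 : ∑ j ∈ V₁, w ↑x j = ∑ j ∈ V₁.erase ↑x, w ↑x j := by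
        rw [← Finset.add_sum_erase _ _ x.2, hdiag, zero_add]
      rw [e1, Finset.sum_neg_distrib]
      ring
    rw [hdiagsum, hrow, hd]
    ring
end

section
/- Let A ∈ ℝ^{n×n} be a symmetric negative semi-definite matrix with zero row sums. If the Coates graph 𝒢(A) is connected, then 𝒢(A) has a positive spanning tree, i.e. a spanning tree all of whose edges {i,j} satisfy A_{ij} > 0. -/
open Finset SimpleGraph Matrix

open SimpleGraph

lemma reach_del {V : Type*} {G : SimpleGraph V} {v w : V}
    (hvw : (G \ fromEdgeSet {s(v, w)}).Reachable v w) :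
    ∀ {a b : V}, G.Reachable a b → (G \ fromEdgeSet {s(v, w)}).Reachable a b := by
  intro a b ⟨p⟩
  induction p with
  | nil => exact Reachable.refl _
  | @cons a c b h p ih =>
    refine Reachable.trans ?_ ih
    by_cases he : s(a, c) = s(v, w)
    · rw [Sym2.eq_iff] at he
      rcases he with ⟨rfl, rfl⟩ | ⟨rfl, rfl⟩
      · exact hvw
      · exact hvw.symm
    · exact Adj.reachable (by simp [sdiff_adj, h, fromEdgeSet_adj, he])

lemma exists_spanning_tree_aux {V : Type*} [Fintype V] :
    ∀ (k : ℕ) (G : SimpleGraph V), G.edgeSet.ncard ≤ k → G.Connected →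
    ∃ H : SimpleGraph V, H ≤ G ∧ H.Connected ∧ H.IsAcyclic := by
  intro k
  induction k with
  | zero =>
    intro G hcard hG
    refine ⟨G, le_refl _, hG, ?_⟩
    intro v c hc
    have h0 : G.edgeSet = ∅ :=
      (Set.ncard_eq_zero (Set.toFinite _)).mp (Nat.le_zero.mp hcard)
    rcases c with _ | ⟨h, p⟩
    · exact hc.ne_nil rfl
    · have : s(_, _) ∈ G.edgeSet := h
      simp [h0] at this
  | succ k ih =>
    intro G hcard hG
    by_cases hac : G.IsAcyclic
    · exact ⟨G, le_refl _, hG, hac⟩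
    · simp only [IsAcyclic, not_forall, not_not] at hac
      obtain ⟨u, c, hc⟩ := hac
      obtain ⟨e, he⟩ := List.exists_mem_of_ne_nil c.edges
        (List.ne_nil_of_length_pos (by
          rw [Walk.length_edges]
          have := hc.three_le_length
          omega))
      induction e using Sym2.inductionOn with
      | hf v w =>
      have hadj : G.Adj v w := c.adj_of_mem_edges he
      have hreach : (G \ fromEdgeSet {s(v, w)}).Reachable v w :=
        (adj_and_reachable_delete_edges_iff_exists_cycle.mpr ⟨u, c, hc, he⟩).2
      set G' := G \ fromEdgeSet {s(v, w)} with hG'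
      have hle : G' ≤ G := sdiff_le
      have hconn' : G'.Connected := by
        rw [connected_iff] at hG ⊢
        exact ⟨fun a b => reach_del hreach (hG.1 a b), hG.2⟩
      have hlt : G'.edgeSet.ncard < G.edgeSet.ncard := by
        apply Set.ncard_lt_ncard _ (Set.toFinite _)
        constructor
        · exact edgeSet_mono hle
        · intro hsub
          have : s(v, w) ∈ G'.edgeSet := hsub ((mem_edgeSet G).mpr hadj)
          rw [mem_edgeSet, hG', sdiff_adj, fromEdgeSet_adj] at this
          exact this.2 ⟨rfl, hadj.ne⟩
      obtain ⟨H, h1, h2, h3⟩ := ih G' (by omega) hconn'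
      exact ⟨H, le_trans h1 hle, h2, h3⟩

lemma exists_spanning_tree {V : Type*} [Fintype V] (G : SimpleGraph V)
    (hG : G.Connected) : ∃ H : SimpleGraph V, H ≤ G ∧ H.Connected ∧ H.IsAcyclic :=
  exists_spanning_tree_aux G.edgeSet.ncard G le_rfl hG


lemma positive_graph_connected
    (n : ℕ) (A : Matrix (Fin n) (Fin n) ℝ) (hsym : A.IsSymm)
    (hnsd : ∀ v : Fin n → ℝ, v ⬝ᵥ A.mulVec v ≤ 0)
    (hrow : ∀ i, ∑ j, A i j = 0)
    (hconn : (SimpleGraph.fromRel fun i j : Fin n => A i j ≠ 0).Connected) :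
    (SimpleGraph.fromRel fun i j : Fin n => 0 < A i j).Connected := by
  classical
  have hAsym : ∀ i j, A j i = A i j := fun i j => congrFun (congrFun hsym i) j
  set Gpos := SimpleGraph.fromRel fun i j : Fin n => 0 < A i j with hGpos
  rw [connected_iff]
  refine ⟨?_, hconn.nonempty⟩
  intro u v
  set S : Finset (Fin n) := Finset.univ.filter (fun j => Gpos.Reachable u j) with hS
  have hmem : ∀ j, j ∈ S ↔ Gpos.Reachable u j := by
    intro j; simp [hS]
  -- cross entries are ≤ 0
  have hneg : ∀ i ∈ S, ∀ j ∈ Sᶜ, A i j ≤ 0 := by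
    intro i hi j hj
    by_contra h
    push_neg at h
    rw [Finset.mem_compl] at hj
    have hne : i ≠ j := fun he => hj (he ▸ hi)
    have hadj : Gpos.Adj i j := by
      rw [hGpos, fromRel_adj]
      exact ⟨hne, Or.inl h⟩
    exact hj ((hmem j).mpr (((hmem i).mp hi).trans hadj.reachable))
  -- quadratic form computation
  set x : Fin n → ℝ := fun j => if j ∈ S then 1 else 0 with hxdef
  have inner : ∀ i, A.mulVec x i = ∑ j ∈ S, A i j := by
    intro i
    simp only [mulVec, dotProduct, hxdef, mul_ite, mul_one, mul_zero]
    rw [Finset.sum_ite_mem, Finset.univ_inter]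
  have hx : x ⬝ᵥ A.mulVec x = ∑ i ∈ S, ∑ j ∈ S, A i j := by
    simp only [dotProduct, inner, hxdef, ite_mul, one_mul, zero_mul]
    rw [Finset.sum_ite_mem, Finset.univ_inter]
    exact Finset.sum_congr rfl fun i _ => inner i
  have hsplit : ∀ i, ∑ j ∈ S, A i j = - ∑ j ∈ Sᶜ, A i j := by
    intro i
    have := Finset.sum_add_sum_compl S (A i)
    rw [hrow i] at this
    linarith
  have hge : (0:ℝ) ≤ ∑ i ∈ S, ∑ j ∈ Sᶜ, A i j := by
    have h1 := hnsd x
    rw [hx] at h1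
    have : ∑ i ∈ S, ∑ j ∈ S, A i j = - ∑ i ∈ S, ∑ j ∈ Sᶜ, A i j := by
      rw [← Finset.sum_neg_distrib]
      exact Finset.sum_congr rfl fun i _ => hsplit i
    linarith [this ▸ h1]
  have hsum0 : ∑ p ∈ S ×ˢ Sᶜ, A p.1 p.2 = 0 := by
    refine le_antisymm (Finset.sum_nonpos fun p hp => ?_) (by rw [Finset.sum_product]; exact hge)
    rw [Finset.mem_product] at hp
    exact hneg p.1 hp.1 p.2 hp.2
  have hcross : ∀ i ∈ S, ∀ j ∈ Sᶜ, A i j = 0 := by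
    intro i hi j hj
    have := (Finset.sum_eq_zero_iff_of_nonpos (fun p hp => by
      rw [Finset.mem_product] at hp
      exact hneg p.1 hp.1 p.2 hp.2)).mp hsum0 (i, j) (Finset.mem_product.mpr ⟨hi, hj⟩)
    exact this
  -- every vertex is in S
  have hstep : ∀ (a b : Fin n) (p : (SimpleGraph.fromRel fun i j : Fin n => A i j ≠ 0).Walk a b),
      a ∈ S → b ∈ S := by
    intro a b p
    induction p with
    | nil => exact id
    | @cons a c b h p ih =>
      intro haS
      refine ih ?_
      rw [fromRel_adj] at h
      obtain ⟨hne, hne0⟩ := h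
      have hac : A a c ≠ 0 := by
        rcases hne0 with h0 | h0
        · exact h0
        · rw [← hAsym]; exact h0
      by_contra hcS
      exact hac (hcross a haS c (Finset.mem_compl.mpr hcS))
  have hall : ∀ w, w ∈ S := by
    intro w
    obtain ⟨p⟩ := hconn.preconnected u w
    exact hstep u w p ((hmem u).mpr (Reachable.refl u))
  exact ((hmem u).mp (hall u)).symm.trans ((hmem v).mp (hall v))

/-- Let `A ∈ ℝ^{n×n}` be symmetric, negative semi-definite, with zero
row sums. If the Coates graph `𝒢(A)` (vertices `{1,…,n}`, an edge `{i,j}` for distinct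
`i,j` with `A i j ≠ 0`, weighted by `A i j`) is connected, then `𝒢(A)` has a positive
spanning tree, i.e. a spanning tree all of whose edges `{i,j}` satisfy `A i j > 0`. -/
theorem coates_graph_has_positive_spanning_tree
    (n : ℕ) (A : Matrix (Fin n) (Fin n) ℝ) (hsym : A.IsSymm)
    (hnsd : ∀ v : Fin n → ℝ, v ⬝ᵥ A.mulVec v ≤ 0)
    (hrow : ∀ i, ∑ j, A i j = 0)
    (hconn : (SimpleGraph.fromRel fun i j : Fin n => A i j ≠ 0).Connected) :
    ∃ T : Finset (Sym2 (Fin n)),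
      (∀ p ∈ T, ∃ i j : Fin n, p = s(i, j) ∧ i ≠ j ∧ A i j ≠ 0) ∧
      (SimpleGraph.fromEdgeSet (T : Set (Sym2 (Fin n)))).Connected ∧
      (SimpleGraph.fromEdgeSet (T : Set (Sym2 (Fin n)))).IsAcyclic ∧
      (∀ i j : Fin n, s(i, j) ∈ T → 0 < A i j) := by
  classical
  have hAsym : ∀ i j, A j i = A i j := fun i j => congrFun (congrFun hsym i) j
  have hposconn := positive_graph_connected n A hsym hnsd hrow hconn
  obtain ⟨H, hHle, hHconn, hHac⟩ :=
    exists_spanning_tree (SimpleGraph.fromRel fun i j : Fin n => 0 < A i j) hposconn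
  refine ⟨(Set.toFinite H.edgeSet).toFinset, ?_, ?_, ?_, ?_⟩
  · intro p hp
    rw [Set.Finite.mem_toFinset] at hp
    induction p using Sym2.inductionOn with
    | hf i j =>
      rw [mem_edgeSet] at hp
      have hadj := hHle hp
      rw [fromRel_adj] at hadj
      obtain ⟨hne, hpos⟩ := hadj
      have hApos : 0 < A i j := by
        rcases hpos with h | h
        · exact h
        · rw [← hAsym]; exact h
      exact ⟨i, j, rfl, hne, ne_of_gt hApos⟩
  · rw [Set.Finite.coe_toFinset, fromEdgeSet_edgeSet]
    exact hHconn
  · rw [Set.Finite.coe_toFinset, fromEdgeSet_edgeSet]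
    exact hHac
  · intro i j hij
    rw [Set.Finite.mem_toFinset, mem_edgeSet] at hij
    have hadj := hHle hij
    rw [fromRel_adj] at hadj
    rcases hadj.2 with h | h
    · exact h
    · rw [← hAsym]; exact h
end
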